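/- Let A be an Artin algebra and n a positive integer. The additive functor F: pGp^{≤ n}(A) → pd^{≤ n}((A-Gproj)-mod), sending X with chosen proper Gorenstein-projective resolution to F_X = Coker((−, d_1): (−, G_1) → (−, G_0)), is faithful: if α: X → X′ is a morphism in pGp^{≤ n}(A) with F(α) = 0, then α is null-homotopic, i.e., α = 0 in pGp^{≤ n}(A). -/

import Mathlib

open CategoryTheory CategoryTheory.Limits CategoryTheory.Pretriangulated Opposite

namespace Paper


section Triangulated

variable (D : Type*) [Category D]

/-- The essential image of a functor, as a set of objects of the target. -/
def essIm {C : Type*} [Category C] (F : C ⥤ D) : Set D :=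
  {d : D | ∃ c : C, Nonempty (F.obj c ≅ d)}

/-- A class of objects is closed under direct summands. -/
def ClosedUnderSummands (S : Set D) : Prop :=
  ∀ ⦃z : D⦄, z ∈ S → ∀ (x : D) (i : x ⟶ z) (p : z ⟶ x), i ≫ p = 𝟙 x → x ∈ S

variable [HasZeroObject D] [Preadditive D] [HasShift D ℤ]
  [∀ n : ℤ, (shiftFunctor D n).Additive] [Pretriangulated D]

/-- A torsion pair in a triangulated category. -/
structure IsTorsionPair (X Y : Set D) : Prop where
  closed_summands_left : ClosedUnderSummands D X
  closed_summands_right : ClosedUnderSummands D Y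
  hom_zero : ∀ ⦃x y : D⦄, x ∈ X → y ∈ Y → ∀ f : x ⟶ y, f = 0
  exists_triangle : ∀ d : D, ∃ (x y : D) (_ : x ∈ X) (_ : y ∈ Y)
    (f : x ⟶ d) (g : d ⟶ y) (h : y ⟶ x⟦(1 : ℤ)⟧),
      Triangle.mk f g h ∈ distTriang D

/-- A t-structure, i.e. a torsion pair whose first class is closed under positive shift. -/
structure IsTStructurePair (X Y : Set D) extends IsTorsionPair D X Y : Prop where
  shift_mem : ∀ ⦃x : D⦄, x ∈ X → x⟦(1 : ℤ)⟧ ∈ X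

/-- A TTF triple. -/
def IsTTFTriple (U V W : Set D) : Prop :=
  IsTStructurePair D U V ∧ IsTStructurePair D V W

/-- A TTF quadruple: two consecutive TTF triples. -/
def IsTTFQuadruple (U V W Z : Set D) : Prop :=
  IsTTFTriple D U V W ∧ IsTTFTriple D V W Z

def rightPerp (S : Set D) : Set D := {d : D | ∀ s ∈ S, ∀ f : s ⟶ d, f = 0}

def leftPerp (S : Set D) : Set D := {d : D | ∀ s ∈ S, ∀ f : d ⟶ s, f = 0}

end Triangulated

section Compact

variable (D : Type*) [Category D] [Preadditive D]

/-- An object of a (pre)additive category is compact if `Hom(M, -)` commutes with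
all (small) coproducts. -/
def IsCompactObj (M : D) : Prop :=
  ∀ ι : Type, Nonempty (PreservesColimitsOfShape (Discrete ι)
    (preadditiveCoyoneda.obj (op M)))

variable [HasZeroObject D] [HasShift D ℤ]
  [∀ n : ℤ, (shiftFunctor D n).Additive] [Pretriangulated D]

/-- A compactly generated triangulated category: it has coproducts and a generating
set of compact objects. -/
def IsCompactlyGeneratedCat : Prop :=
  HasCoproducts.{0} D ∧ ∃ S : Set D, (∀ s ∈ S, IsCompactObj D s) ∧
    ∀ X : D, (∀ s ∈ S, ∀ n : ℤ, ∀ f : s ⟶ X⟦n⟧, f = 0) → IsZero X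

/-- A torsion pair is compactly generated when it is of the form `(⊥(S⊥), S⊥)` for a
set `S` of compact objects. -/
def IsCompactlyGeneratedTorsionPair (U V : Set D) : Prop :=
  ∃ S : Set D, (∀ s ∈ S, IsCompactObj D s) ∧
    V = rightPerp D S ∧ U = leftPerp D V

/-- A class of objects `S` cogenerates the class `amb` if any object of `amb` with no
nonzero map to any shift of an object of `S` is zero. -/
def CogeneratesIn (amb S : Set D) : Prop :=
  ∀ X ∈ amb, (∀ s ∈ S, ∀ n : ℤ, ∀ f : X ⟶ s⟦n⟧, f = 0) → IsZero X

/-- A class of objects cogenerates the category. -/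
def Cogenerates (S : Set D) : Prop :=
  ∀ X : D, (∀ s ∈ S, ∀ n : ℤ, ∀ f : X ⟶ s⟦n⟧, f = 0) → IsZero X

/-- Localizing subcategories (as classes of objects): closed under isomorphisms, shifts,
extensions and all existing coproducts. -/
def IsLocalizingClass (S : Set D) : Prop :=
  (∀ ⦃X Y : D⦄, X ∈ S → Nonempty (X ≅ Y) → Y ∈ S) ∧
  (∀ X ∈ S, X⟦(1 : ℤ)⟧ ∈ S ∧ X⟦(-1 : ℤ)⟧ ∈ S) ∧
  (∀ T ∈ distTriang D, T.obj₁ ∈ S → T.obj₂ ∈ S → T.obj₃ ∈ S) ∧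
  (∀ (ι : Type) (f : ι → D) (hf : HasCoproduct f), (∀ i, f i ∈ S) →
    (letI := hf; (∐ f) ∈ S))

/-- The smallest localizing class containing `S`. -/
def Loc (S : Set D) : Set D :=
  ⋂₀ {T : Set D | IsLocalizingClass D T ∧ S ⊆ T}

/-- Thick subcategories (as classes of objects). -/
def IsThickClass (S : Set D) : Prop :=
  (∀ ⦃X Y : D⦄, X ∈ S → Nonempty (X ≅ Y) → Y ∈ S) ∧
  (∀ X ∈ S, X⟦(1 : ℤ)⟧ ∈ S ∧ X⟦(-1 : ℤ)⟧ ∈ S) ∧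
  (∀ T ∈ distTriang D, T.obj₁ ∈ S → T.obj₂ ∈ S → T.obj₃ ∈ S) ∧
  ClosedUnderSummands D S

end Compact


/-- The image of a class of objects under a functor, up to isomorphism. -/
def EIm {C D : Type*} [Category C] [Category D] (F : C ⥤ D) (S : Set C) : Set D :=
  {d : D | ∃ c ∈ S, Nonempty (F.obj c ≅ d)}


variable (Y D X : Type*) [Category Y] [Category D] [Category X]
  [HasZeroObject Y] [HasZeroObject D] [HasZeroObject X]
  [Preadditive Y] [Preadditive D] [Preadditive X]
  [HasShift Y ℤ] [HasShift D ℤ] [HasShift X ℤ]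
  [∀ n : ℤ, (shiftFunctor Y n).Additive] [∀ n : ℤ, (shiftFunctor D n).Additive]
  [∀ n : ℤ, (shiftFunctor X n).Additive]
  [Pretriangulated Y] [Pretriangulated D] [Pretriangulated X]

/-- A recollement of triangulated categories `(Y ≡ D ≡ X)` in the sense of
Beilinson–Bernstein–Deligne. -/
structure Recollement where
  iStar : D ⥤ Y
  iLow : Y ⥤ D
  iShriek : D ⥤ Y
  jLow : X ⥤ D
  jStar : D ⥤ X
  jUp : X ⥤ D
  commShift_iStar : iStar.CommShift ℤ
  commShift_iLow : iLow.CommShift ℤ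
  commShift_iShriek : iShriek.CommShift ℤ
  commShift_jLow : jLow.CommShift ℤ
  commShift_jStar : jStar.CommShift ℤ
  commShift_jUp : jUp.CommShift ℤ
  isTriangulated_iStar : letI := commShift_iStar; iStar.IsTriangulated
  isTriangulated_iLow : letI := commShift_iLow; iLow.IsTriangulated
  isTriangulated_iShriek : letI := commShift_iShriek; iShriek.IsTriangulated
  isTriangulated_jLow : letI := commShift_jLow; jLow.IsTriangulated
  isTriangulated_jStar : letI := commShift_jStar; jStar.IsTriangulated
  isTriangulated_jUp : letI := commShift_jUp; jUp.IsTriangulated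
  adj₁ : iStar ⊣ iLow
  adj₂ : iLow ⊣ iShriek
  adj₃ : jLow ⊣ jStar
  adj₄ : jStar ⊣ jUp
  iLow_full : iLow.Full
  iLow_faithful : iLow.Faithful
  jLow_full : jLow.Full
  jLow_faithful : jLow.Faithful
  jUp_full : jUp.Full
  jUp_faithful : jUp.Faithful
  jStar_iLow_zero : ∀ y : Y, IsZero (jStar.obj (iLow.obj y))
  triangle₁ : ∀ Z : D, ∃ h : (iLow.obj (iStar.obj Z)) ⟶ (jLow.obj (jStar.obj Z))⟦(1 : ℤ)⟧,
      Triangle.mk (adj₃.counit.app Z) (adj₁.unit.app Z) h ∈ distTriang D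
  triangle₂ : ∀ Z : D, ∃ h : (jUp.obj (jStar.obj Z)) ⟶ (iLow.obj (iShriek.obj Z))⟦(1 : ℤ)⟧,
      Triangle.mk (adj₂.counit.app Z) (adj₄.unit.app Z) h ∈ distTriang D

/-- A ladder of recollements of height 2: two recollements glued along shared rows. -/
structure Ladder2 where
  top : Recollement Y D X
  bot : Recollement X D Y
  compat₁ : bot.iLow = top.jLow
  compat₂ : bot.iShriek = top.jStar
  compat₃ : bot.jStar = top.iStar
  compat₄ : bot.jUp = top.iLow

/-- A ladder of recollements of height 3. -/
structure Ladder3 where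
  toLadder2 : Ladder2 Y D X
  bot : Recollement Y D X
  compat₁ : bot.iLow = toLadder2.bot.jLow
  compat₂ : bot.iShriek = toLadder2.bot.jStar
  compat₃ : bot.jStar = toLadder2.bot.iStar
  compat₄ : bot.jUp = toLadder2.bot.iLow



variable (A : Type) [Ring A]

/-- A (not necessarily finitely generated) module is Gorenstein-projective if it is a
cocycle of a totally acyclic complex of projective modules. -/
def IsGorensteinProjective (G : ModuleCat.{0} A) : Prop :=
  ∃ (P : ℤ → ModuleCat.{0} A) (d : ∀ n : ℤ, P n ⟶ P (n + 1)),
    (∀ n, Projective (P n)) ∧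
    (∀ n, Function.Exact (d n) (d (n + 1))) ∧
    (∀ (Q : ModuleCat.{0} A), Projective Q → ∀ n : ℤ,
      Function.Exact (fun φ : P (n + 1 + 1) ⟶ Q => d (n + 1) ≫ φ)
        (fun φ : P (n + 1) ⟶ Q => d n ≫ φ)) ∧
    Nonempty (G ≅ ModuleCat.of A (LinearMap.ker (d 0).hom))

/-- A finitely generated Gorenstein-projective module: a cocycle of a totally acyclic
complex of finitely generated projective modules. -/
def IsFGGorensteinProjective (G : ModuleCat.{0} A) : Prop :=
  Module.Finite A G ∧
  ∃ (P : ℤ → ModuleCat.{0} A) (d : ∀ n : ℤ, P n ⟶ P (n + 1)),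
    (∀ n, Projective (P n) ∧ Module.Finite A (P n)) ∧
    (∀ n, Function.Exact (d n) (d (n + 1))) ∧
    (∀ (Q : ModuleCat.{0} A), Projective Q → ∀ n : ℤ,
      Function.Exact (fun φ : P (n + 1 + 1) ⟶ Q => d (n + 1) ≫ φ)
        (fun φ : P (n + 1) ⟶ Q => d n ≫ φ)) ∧
    Nonempty (G ≅ ModuleCat.of A (LinearMap.ker (d 0).hom))

theorem isGP_of_isFGGP {G : ModuleCat.{0} A} (h : IsFGGorensteinProjective A G) :
    IsGorensteinProjective A G := by
  obtain ⟨-, P, d, h1, h2, h3, h4⟩ := h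
  exact ⟨P, d, fun n => (h1 n).1, h2, h3, h4⟩

/-- A Gorenstein-injective module. -/
def IsGorensteinInjective (G : ModuleCat.{0} A) : Prop :=
  ∃ (E : ℤ → ModuleCat.{0} A) (d : ∀ n : ℤ, E n ⟶ E (n + 1)),
    (∀ n, Injective (E n)) ∧
    (∀ n, Function.Exact (d n) (d (n + 1))) ∧
    (∀ (I : ModuleCat.{0} A), Injective I → ∀ n : ℤ,
      Function.Exact (fun φ : I ⟶ E n => φ ≫ d n)
        (fun φ : I ⟶ E (n + 1) => φ ≫ d (n + 1))) ∧
    Nonempty (G ≅ ModuleCat.of A (LinearMap.ker (d 0).hom))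

/-- The category `A`-GP of Gorenstein-projective `A`-modules. -/
abbrev GPCat := ObjectProperty.FullSubcategory (IsGorensteinProjective A)

/-- The category `A`-Gproj of finitely generated Gorenstein-projective `A`-modules. -/
abbrev GprojCat := ObjectProperty.FullSubcategory (IsFGGorensteinProjective A)

/-- Two maps are stably equivalent if their difference factors through a projective module. -/
def stableRel (Z : ModuleCat.{0} A → Prop) : HomRel (ObjectProperty.FullSubcategory Z) :=
  fun X Y f g => ∃ (P : ObjectProperty.FullSubcategory Z) (_ : Projective P.obj)
    (u : X ⟶ P) (v : P ⟶ Y), f - g = u ≫ v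

/-- The stable category `A`-<u>GP</u> of Gorenstein-projective modules modulo projectives. -/
def StableGP := CategoryTheory.Quotient (stableRel A (IsGorensteinProjective A))

instance : Category (StableGP A) := by dsimp [StableGP]; infer_instance

/-- The stable category `A`-<u>Gproj</u> of finitely generated Gorenstein-projective
modules modulo projectives. -/
def StableGproj := CategoryTheory.Quotient (stableRel A (IsFGGorensteinProjective A))

instance : Category (StableGproj A) := by dsimp [StableGproj]; infer_instance

/-- The inclusion of categories of Gorenstein-projective modules. -/
def inclGP : GprojCat A ⥤ GPCat A := ObjectProperty.ιOfLE (fun _ h => isGP_of_isFGGP A h)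

/-- The canonical functor from the finitely generated stable category into the big one. -/
def stIncl : StableGproj A ⥤ StableGP A :=
  CategoryTheory.Quotient.lift _ (inclGP A ⋙ CategoryTheory.Quotient.functor _)
    (by
      rintro X Y f g ⟨P, hP, u, v, hfg⟩
      apply CategoryTheory.Quotient.sound
      exact ⟨⟨P.obj, isGP_of_isFGGP A P.property⟩, hP, ObjectProperty.homMk u.hom,
        ObjectProperty.homMk v.hom, by
          have h := congrArg InducedCategory.Hom.hom hfg
          apply ObjectProperty.hom_ext
          first
          | exact h
          | simpa [inclGP, ObjectProperty.ιOfLE] using h⟩)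

/-- The module `M` has finite injective dimension. -/
def FiniteInjectiveDimension (M : ModuleCat.{0} A) : Prop :=
  ∃ (n : ℕ) (I : ℕ → ModuleCat.{0} A) (d : ∀ i : ℕ, I i ⟶ I (i + 1)) (ε : M ⟶ I 0),
    (∀ i, Injective (I i)) ∧ (∀ i, n < i → IsZero (I i)) ∧
    Function.Injective ε ∧ Function.Exact ε (d 0) ∧
    ∀ i, Function.Exact (d i) (d (i + 1))

/-- The module `M` has finite projective dimension. -/
def FiniteProjectiveDimension (M : ModuleCat.{0} A) : Prop :=
  ∃ (n : ℕ) (P : ℕ → ModuleCat.{0} A) (d : ∀ i : ℕ, P (i + 1) ⟶ P i) (ε : P 0 ⟶ M),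
    (∀ i, Projective (P i)) ∧ (∀ i, n < i → IsZero (P i)) ∧
    Function.Surjective ε ∧ Function.Exact (d 0) ε ∧
    ∀ i, Function.Exact (d (i + 1)) (d i)

/-- An Artin algebra (more generally, a ring) is Gorenstein if the regular module has
finite injective dimension on both sides. -/
def IsGorensteinRing : Prop :=
  FiniteInjectiveDimension A (ModuleCat.of A A) ∧
  FiniteInjectiveDimension Aᵐᵒᵖ (ModuleCat.of Aᵐᵒᵖ Aᵐᵒᵖ)

/-- Vanishing of `Ext^i(M, N)` for all `i > 0`. -/
def ExtVanishesPos (M N : ModuleCat.{0} A) : Prop :=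
  ∀ i : ℕ, 0 < i → Subsingleton (((Ext ℤ (ModuleCat.{0} A) i).obj (op M)).obj N)

/-- A ring is virtually Gorenstein if `(A-GP)^⊥ = ^⊥(A-GI)`. -/
def IsVirtuallyGorenstein : Prop :=
  {X : ModuleCat.{0} A | ∀ G, IsGorensteinProjective A G → ExtVanishesPos A G X} =
  {Y : ModuleCat.{0} A | ∀ I, IsGorensteinInjective A I → ExtVanishesPos A Y I}

/-- An indecomposable module: nonzero, and in any biproduct decomposition one summand
vanishes. -/
def IsIndecomposable (N : ModuleCat.{0} A) : Prop :=
  ¬ IsZero N ∧ ∀ (Y Z : ModuleCat.{0} A), Nonempty (N ≅ Y ⊞ Z) → IsZero Y ∨ IsZero Z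

/-- An Artin algebra is of finite Cohen-Macaulay type if there are only finitely many
isomorphism classes of indecomposable finitely generated Gorenstein-projective modules. -/
def IsFiniteCMType : Prop :=
  ∃ (k : ℕ) (M : Fin k → ModuleCat.{0} A),
    ∀ N : ModuleCat.{0} A, IsFGGorensteinProjective A N → IsIndecomposable A N →
      ∃ i, Nonempty (N ≅ M i)


section HomotopyCategories

variable (A : Type) [Ring A]

/-- The homotopy category `K(A-GP)` of complexes of Gorenstein-projective modules. -/
abbrev KGP := HomotopyCategory (GPCat A) (ComplexShape.up ℤ)

/-- An object of the homotopy category of `A`-modules which is a bounded complex of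
finitely generated modules. -/
def FGBounded (X : HomotopyCategory (ModuleCat.{0} A) (ComplexShape.up ℤ)) : Prop :=
  (∀ n : ℤ, Module.Finite A (X.as.X n)) ∧
  ∃ a b : ℤ, ∀ n : ℤ, (n < a ∨ b < n) → IsZero (X.as.X n)

/-- The bounded homotopy category `K^b(A-mod)` of finitely generated `A`-modules,
realized as a full subcategory of the unbounded homotopy category. -/
abbrev KbCat := ObjectProperty.FullSubcategory (FGBounded A)

/-- `Gproj`-quasi-isomorphisms in `K^b(A-mod)`: maps `f` such that `Hom_A(G, f)` is a
quasi-isomorphism for every finitely generated Gorenstein-projective `G`.  The bounded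
Gorenstein derived category `D^b_gp(A)` is the Verdier quotient of `K^b(A-mod)` by the
thick subcategory of `Gproj`-acyclic complexes, i.e. the localization of `K^b(A-mod)`
at this class of morphisms. -/
def gqis : MorphismProperty (KbCat A) := fun _ _ f =>
  ∀ (G : ModuleCat.{0} A), IsFGGorensteinProjective A G → ∀ n : ℤ,
    IsIso ((HomotopyCategory.homologyFunctor AddCommGrpCat.{0} (ComplexShape.up ℤ) n).map
      (((preadditiveCoyoneda.obj (op G)).mapHomotopyCategory (ComplexShape.up ℤ)).map
        ((ObjectProperty.ι (FGBounded A)).map f)))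

end HomotopyCategories


/-- The subring of upper triangular `n × n` matrices over `A`. -/
def upperTriangular (A : Type) [Ring A] (n : ℕ) : Subring (Matrix (Fin n) (Fin n) A) where
  carrier := {M | ∀ i j : Fin n, j < i → M i j = 0}
  zero_mem' := by intro i j _; rfl
  one_mem' := by
    intro i j hij
    exact Matrix.one_apply_ne (ne_of_gt hij)
  add_mem' := by
    intro M N hM hN i j hij
    simp [Matrix.add_apply, hM i j hij, hN i j hij]
  neg_mem' := by
    intro M hM i j hij
    simp [Matrix.neg_apply, hM i j hij]
  mul_mem' := by
    intro M N hM hN i j hij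
    show ∑ k, M i k * N k j = 0
    apply Finset.sum_eq_zero
    intro k _
    by_cases hk : k < i
    · rw [hM i k hk, zero_mul]
    · have : j < k := lt_of_lt_of_le hij (not_lt.mp hk)
      rw [hN k j this, mul_zero]

/-- The `n × n` upper triangular matrix algebra `T_n(A)`. -/
def Tn (A : Type) [Ring A] (n : ℕ) : Type := upperTriangular A n

instance (A : Type) [Ring A] (n : ℕ) : Ring (Tn A n) :=
  inferInstanceAs (Ring (upperTriangular A n))



/-- The underlying type of the triangular matrix ring `(A N; 0 B)` attached to an
`A`-`B`-bimodule `N`. -/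
def TriMat (A N B : Type) : Type := A × N × B

namespace TriMat

variable (A N B : Type) [Ring A] [Ring B] [AddCommGroup N]
  [Module A N] [Module Bᵐᵒᵖ N] [SMulCommClass A Bᵐᵒᵖ N]

instance : AddCommGroup (TriMat A N B) := inferInstanceAs (AddCommGroup (A × N × B))

instance : Mul (TriMat A N B) :=
  ⟨fun x y => (x.1 * y.1, x.1 • y.2.1 + MulOpposite.op y.2.2 • x.2.1, x.2.2 * y.2.2)⟩

instance : One (TriMat A N B) := ⟨((1 : A), (0 : N), (1 : B))⟩

/-- The triangular matrix ring `(A N; 0 B)`: multiplication is given by matrix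
multiplication. -/
instance ring : Ring (TriMat A N B) :=
  { (inferInstance : AddCommGroup (TriMat A N B)) with
    mul := (· * ·)
    one := 1
    mul_assoc := by
      rintro ⟨xa, xn, xb⟩ ⟨ya, yn, yb⟩ ⟨za, zn, zb⟩
      show ((xa * ya) * za, (xa * ya) • zn + MulOpposite.op zb • (xa • yn + MulOpposite.op yb • xn), (xb * yb) * zb) =
        (xa * (ya * za), xa • (ya • zn + MulOpposite.op zb • yn) + MulOpposite.op (yb * zb) • xn, xb * (yb * zb))
      rw [mul_assoc, mul_assoc, mul_smul, smul_add, smul_add, MulOpposite.op_mul, mul_smul,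
        smul_comm xa (MulOpposite.op zb) yn, add_assoc]
    one_mul := by
      rintro ⟨xa, xn, xb⟩
      show ((1 : A) * xa, (1 : A) • xn + MulOpposite.op xb • (0 : N), (1 : B) * xb) = (xa, xn, xb)
      simp
    mul_one := by
      rintro ⟨xa, xn, xb⟩
      show (xa * 1, xa • (0 : N) + MulOpposite.op (1 : B) • xn, xb * 1) = (xa, xn, xb)
      simp
    left_distrib := by
      rintro ⟨xa, xn, xb⟩ ⟨ya, yn, yb⟩ ⟨za, zn, zb⟩
      show (xa * (ya + za), xa • (yn + zn) + MulOpposite.op (yb + zb) • xn, xb * (yb + zb)) =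
        ((xa * ya, xa • yn + MulOpposite.op yb • xn, xb * yb) + (xa * za, xa • zn + MulOpposite.op zb • xn, xb * zb)
          : TriMat A N B)
      show (xa * (ya + za), xa • (yn + zn) + MulOpposite.op (yb + zb) • xn, xb * (yb + zb)) =
        (xa * ya + xa * za, (xa • yn + MulOpposite.op yb • xn) + (xa • zn + MulOpposite.op zb • xn), xb * yb + xb * zb)
      rw [mul_add, mul_add, smul_add, MulOpposite.op_add, add_smul]
      refine congrArg _ (congrArg₂ _ ?_ rfl)
      abel
    right_distrib := by
      rintro ⟨xa, xn, xb⟩ ⟨ya, yn, yb⟩ ⟨za, zn, zb⟩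
      show ((xa + ya) * za, (xa + ya) • zn + MulOpposite.op zb • (xn + yn), (xb + yb) * zb) =
        ((xa * za, xa • zn + MulOpposite.op zb • xn, xb * zb) + (ya * za, ya • zn + MulOpposite.op zb • yn, yb * zb)
          : TriMat A N B)
      show ((xa + ya) * za, (xa + ya) • zn + MulOpposite.op zb • (xn + yn), (xb + yb) * zb) =
        (xa * za + ya * za, (xa • zn + MulOpposite.op zb • xn) + (ya • zn + MulOpposite.op zb • yn), xb * zb + yb * zb)
      rw [add_mul, add_mul, add_smul, smul_add]
      refine congrArg _ (congrArg₂ _ ?_ rfl)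
      abel
    zero_mul := by
      rintro ⟨xa, xn, xb⟩
      show ((0 : A) * xa, (0 : A) • xn + MulOpposite.op xb • (0 : N), (0 : B) * xb) = (0, 0, 0)
      simp
    mul_zero := by
      rintro ⟨xa, xn, xb⟩
      show (xa * 0, xa • (0 : N) + MulOpposite.op (0 : B) • xn, xb * 0) = (0, 0, 0)
      simp }

end TriMat



variable (A : Type) [Ring A]

variable {A}

/-- The underlying morphism of `A`-modules of a morphism in `A-Gproj`. -/
def mval {X Y : GprojCat A} (f : X ⟶ Y) : X.obj ⟶ Y.obj := f.hom

variable (A)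

/-- A proper Gorenstein-projective resolution `0 → G_n → ⋯ → G_1 → G_0 → X → 0` of length
at most `n`: an exact sequence of finitely generated Gorenstein-projective modules which
stays exact under `Hom_A(Q, -)` for every finitely generated Gorenstein-projective `Q`. -/
structure ProperGPResolution (n : ℕ) (X : ModuleCat.{0} A) where
  G : ℕ → GprojCat A
  d : ∀ i : ℕ, G (i + 1) ⟶ G i
  ε : (G 0).obj ⟶ X
  bounded : ∀ i, n < i → IsZero (G i).obj
  eps_surjective : Function.Surjective ε
  exact_zero : Function.Exact (mval (d 0)) ε
  exact_succ : ∀ i, Function.Exact (mval (d (i + 1))) (mval (d i))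
  proper_surjective : ∀ Q : GprojCat A,
    Function.Surjective (fun φ : Q.obj ⟶ (G 0).obj => φ ≫ ε)
  proper_exact_zero : ∀ Q : GprojCat A,
    Function.Exact (fun φ : Q.obj ⟶ (G 1).obj => φ ≫ mval (d 0))
      (fun φ : Q.obj ⟶ (G 0).obj => φ ≫ ε)
  proper_exact_succ : ∀ (Q : GprojCat A) (i : ℕ),
    Function.Exact (fun φ : Q.obj ⟶ (G (i + 2)).obj => φ ≫ mval (d (i + 1)))
      (fun φ : Q.obj ⟶ (G (i + 1)).obj => φ ≫ mval (d i))

/-- The `(A-Gproj)`-module `F_X` determined by a proper Gorenstein-projective resolution: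
the cokernel of `(-, G_1) → (-, G_0)`. -/
noncomputable def FX {n : ℕ} {X : ModuleCat.{0} A} (R : ProperGPResolution A n X) :
    (GprojCat A)ᵒᵖ ⥤ AddCommGrpCat.{0} :=
  cokernel (preadditiveYoneda.map (R.d 0))

/-- An `(A-Gproj)`-module (an additive contravariant functor `A-Gproj → Ab`) admits a
projective resolution `0 → (-, G_n) → ⋯ → (-, G_0) → F → 0` of length at most `n` by
representable functors. -/
def YonedaPdLE (F : (GprojCat A)ᵒᵖ ⥤ AddCommGrpCat.{0}) (n : ℕ) : Prop :=
  ∃ (G : ℕ → GprojCat A) (d : ∀ i : ℕ, G (i + 1) ⟶ G i)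
    (ε : preadditiveYoneda.obj (G 0) ⟶ F),
    (∀ i, n < i → IsZero (G i).obj) ∧
    (∀ Q : GprojCat A, Function.Surjective (ε.app (op Q))) ∧
    (∀ Q : GprojCat A, Function.Exact ((preadditiveYoneda.map (d 0)).app (op Q))
      (ε.app (op Q))) ∧
    (∀ (Q : GprojCat A) (i : ℕ),
      Function.Exact ((preadditiveYoneda.map (d (i + 1))).app (op Q))
        ((preadditiveYoneda.map (d i)).app (op Q)))

/-- Indecomposable objects of the category of `(A-Gproj)`-modules. -/
def IsIndecomposableFunctor (F : (GprojCat A)ᵒᵖ ⥤ AddCommGrpCat.{0}) : Prop :=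
  ¬ IsZero F ∧ ∀ (Y Z : (GprojCat A)ᵒᵖ ⥤ AddCommGrpCat.{0}),
    Nonempty (F ≅ Y ⊞ Z) → IsZero Y ∨ IsZero Z


/-- The full subcategory attached to a class of objects. -/
abbrev Subcat {C : Type*} [Category C] (S : Set C) : Type _ :=
  ObjectProperty.FullSubcategory (fun c => c ∈ S)

/-- The inclusion of a full subcategory. -/
abbrev subIncl {C : Type*} [Category C] (S : Set C) : Subcat S ⥤ C :=
  ObjectProperty.ι _

/-- An object of the derived category of `A`-modules with bounded, degreewise finitely
generated cohomology, i.e. an object of `D^b(A-mod)`. -/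
def DbFGBounded (A : Type) [Ring A] [HasDerivedCategory.{0} (ModuleCat.{0} A)]
    (Z : DerivedCategory (ModuleCat.{0} A)) : Prop :=
  (∀ n : ℤ, Module.Finite A ((DerivedCategory.homologyFunctor (ModuleCat.{0} A) n).obj Z)) ∧
  ∃ a b : ℤ, ∀ n : ℤ, (n < a ∨ b < n) →
    IsZero ((DerivedCategory.homologyFunctor (ModuleCat.{0} A) n).obj Z)

/-- The projection `T_{n+1}(R) → T_n(R)` onto the upper-left block. -/
def trunc (R : Type) [Ring R] (m : ℕ) : Tn R (m + 1) →+* Tn R m where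
  toFun M := ⟨fun i j => M.1 i.castSucc j.castSucc,
    fun i j h => M.2 i.castSucc j.castSucc (by simpa using h)⟩
  map_one' := by
    apply Subtype.ext
    ext i j
    show (1 : Matrix (Fin (m+1)) (Fin (m+1)) R) i.castSucc j.castSucc = (1 : Matrix _ _ R) i j
    simp [Matrix.one_apply, Fin.castSucc_inj]
  map_mul' := by
    intro M N
    apply Subtype.ext
    ext i j
    show (M.1 * N.1) i.castSucc j.castSucc = _
    show ∑ k, M.1 i.castSucc k * N.1 k j.castSucc =
      ∑ k : Fin m, M.1 i.castSucc k.castSucc * N.1 k.castSucc j.castSucc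
    rw [Fin.sum_univ_castSucc]
    have : N.1 (Fin.last m) j.castSucc = 0 := N.2 _ _ (Fin.castSucc_lt_last j)
    simp [this]
  map_zero' := by
    apply Subtype.ext
    ext i j
    rfl
  map_add' := by
    intro M N
    apply Subtype.ext
    ext i j
    rfl

/-- The category of `(A-Gproj)`-modules of projective dimension at most `n` is of finite
(representation) type: there are only finitely many isomorphism classes of indecomposable
such functors. -/
def YonedaPdLEFiniteType (A : Type) [Ring A] (n : ℕ) : Prop :=
  ∃ (k : ℕ) (M : Fin k → ((GprojCat A)ᵒᵖ ⥤ AddCommGrpCat.{0})),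
    ∀ F : (GprojCat A)ᵒᵖ ⥤ AddCommGrpCat.{0}, F.Additive → YonedaPdLE A F n →
      IsIndecomposableFunctor A F → ∃ i, Nonempty (F ≅ M i)

universe v u

section NullHomotopy

variable {C : Type u} [Category.{v} C] [Preadditive C]

lemma exists_app_eq_of_cokernel_π_app_eq_zero {D : Type*} [Category D]
    {F G : D ⥤ AddCommGrpCat.{v}} (f : F ⟶ G) (c : D) (x : G.obj c)
    (hx : (cokernel.π f).app c x = 0) : ∃ y : F.obj c, f.app c y = x := by
  have hS := (ShortComplex.exact_of_g_is_cokernel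
    (ShortComplex.mk f (cokernel.π f) (cokernel.condition f)) (cokernelIsCokernel f)).map
    ((evaluation D AddCommGrpCat.{v}).obj c)
  rw [ShortComplex.ab_exact_iff] at hS
  exact hS x hx

lemma exists_comp_eq_of_yoneda_comp_cokernel_π_eq_zero {X Y Z : C} {f : X ⟶ Z} {g : Y ⟶ Z}
    (hf : preadditiveYoneda.map f ≫ cokernel.π (preadditiveYoneda.map g) = 0) :
    ∃ h : X ⟶ Y, h ≫ g = f := by
  have hx : (cokernel.π (preadditiveYoneda.map g)).app (op X)
      ((preadditiveYoneda.map f).app (op X) (𝟙 X)) = 0 := by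
    have := congrArg (fun τ => τ.app (op X) (𝟙 X)) hf
    simp only [NatTrans.comp_app, NatTrans.app_zero] at this
    exact this
  obtain ⟨h, hh⟩ := exists_app_eq_of_cokernel_π_app_eq_zero _ _ _ hx
  exact ⟨h, (hh : h ≫ g = 𝟙 X ≫ f).trans (Category.id_comp f)⟩

variable {P Q : ℕ → C} {dP : ∀ i, P (i + 1) ⟶ P i} {dQ : ∀ i, Q (i + 1) ⟶ Q i}

/-- The homotopy is built degree by degree: `h (i + 1)` lifts `f (i + 1) - dP i ≫ h i`
along `dQ (i + 1)`, which is possible because `dQ i` kills it. -/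
theorem exists_nullHomotopy_of_factors_through_d_zero (f : ∀ i, P i ⟶ Q i)
    (hdP : ∀ i, dP (i + 1) ≫ dP i = 0) (hf : ∀ i, dP i ≫ f i = f (i + 1) ≫ dQ i)
    (hf₀ : ∃ h : P 0 ⟶ Q 1, h ≫ dQ 0 = f 0)
    (hlift : ∀ i (q : P (i + 1) ⟶ Q (i + 1)), q ≫ dQ i = 0 →
      ∃ ψ : P (i + 1) ⟶ Q (i + 2), ψ ≫ dQ (i + 1) = q) :
    ∃ h : ∀ i, P i ⟶ Q (i + 1), f 0 = h 0 ≫ dQ 0 ∧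
      ∀ i, f (i + 1) = h (i + 1) ≫ dQ (i + 1) + dP i ≫ h i := by
  let Extendable : ∀ i, (P i ⟶ Q (i + 1)) → Prop := fun i h => dP i ≫ (f i - h ≫ dQ i) = 0
  have step : ∀ i (h : P i ⟶ Q (i + 1)), Extendable i h → ∃ h' : P (i + 1) ⟶ Q (i + 2),
      h' ≫ dQ (i + 1) = f (i + 1) - dP i ≫ h ∧ Extendable (i + 1) h' := by
    intro i h hh
    obtain ⟨h', hh'⟩ := hlift i (f (i + 1) - dP i ≫ h) (by
      rw [Preadditive.sub_comp, Category.assoc, ← hf, ← Preadditive.comp_sub]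
      exact hh)
    refine ⟨h', hh', ?_⟩
    simp only [Extendable, hh', sub_sub_cancel, ← Category.assoc, hdP, zero_comp]
  choose next hnext using step
  obtain ⟨h₀, hh₀⟩ := hf₀
  let seq : ∀ i, {h : P i ⟶ Q (i + 1) // Extendable i h} := fun i =>
    Nat.rec ⟨h₀, by simp only [Extendable, hh₀, sub_self, comp_zero]⟩
      (fun i s => ⟨next i s.1 s.2, (hnext i s.1 s.2).2⟩) i
  refine ⟨fun i => (seq i).1, hh₀.symm, fun i => ?_⟩
  rw [(hnext i (seq i).1 (seq i).2).1, sub_add_cancel]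

end NullHomotopy

namespace ProperGPResolution

variable {A : Type} [Ring A] {n : ℕ} {X : ModuleCat.{0} A} (R : ProperGPResolution A n X)

lemma d_comp_d (i : ℕ) : R.d (i + 1) ≫ R.d i = 0 := by
  ext x
  exact (R.exact_succ i).apply_apply_eq_zero x

lemma exists_lift_of_comp_d_eq_zero {Q : GprojCat A} {i : ℕ} (q : Q ⟶ R.G (i + 1))
    (hq : q ≫ R.d i = 0) : ∃ ψ : Q ⟶ R.G (i + 2), ψ ≫ R.d (i + 1) = q := by
  obtain ⟨ψ, hψ⟩ := (R.proper_exact_succ Q i (mval q)).mp (congrArg mval hq)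
  exact ⟨ObjectProperty.homMk ψ, ObjectProperty.hom_ext _ hψ⟩

end ProperGPResolution

theorem statement9_general
    (A : Type) [Ring A]
    (n : ℕ)
    (X X' : ModuleCat.{0} A)
    (R : ProperGPResolution A n X) (R' : ProperGPResolution A n X')
    (αc : ∀ i : ℕ, R.G i ⟶ R'.G i)
    (hcomm : ∀ i : ℕ, mval (R.d i) ≫ mval (αc i) = mval (αc (i + 1)) ≫ mval (R'.d i))
    (hzero : preadditiveYoneda.map (αc 0) ≫ cokernel.π (preadditiveYoneda.map (R'.d 0)) = 0) :
    ∃ h : ∀ i : ℕ, R.G i ⟶ R'.G (i + 1),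
      mval (αc 0) = mval (h 0) ≫ mval (R'.d 0) ∧
      ∀ i : ℕ, mval (αc (i + 1)) =
        mval (h (i + 1)) ≫ mval (R'.d (i + 1)) + mval (R.d i) ≫ mval (h i) := by
  obtain ⟨h, h₀, hsucc⟩ := exists_nullHomotopy_of_factors_through_d_zero αc R.d_comp_d
    (fun i => ObjectProperty.hom_ext _ (hcomm i))
    (exists_comp_eq_of_yoneda_comp_cokernel_π_eq_zero hzero)
    (fun _ q hq => R'.exists_lift_of_comp_d_eq_zero q hq)
  exact ⟨h, congrArg mval h₀, fun i => congrArg mval (hsucc i)⟩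

/-- faithfulness of `F : pGp^(≤n)(A) → pd^(≤n)((A-Gproj)-mod)`.
If a morphism `α : X ⟶ X'`, lifted to a chain map `αc` between chosen proper
Gorenstein-projective resolutions, induces the zero morphism `F(α) = 0` on the
cokernels, then the chain map is null-homotopic, i.e. `α = 0` in `pGp^(≤n)(A)`. -/
theorem statement9
    (R₀ : Type) [CommRing R₀] [IsArtinianRing R₀]
    (A : Type) [Ring A] [Algebra R₀ A] [Module.Finite R₀ A]
    (n : ℕ) (hn : 0 < n)
    (X X' : ModuleCat.{0} A)
    (R : ProperGPResolution A n X) (R' : ProperGPResolution A n X')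
    (α : X ⟶ X') (αc : ∀ i : ℕ, R.G i ⟶ R'.G i)
    (hc0 : mval (αc 0) ≫ R'.ε = R.ε ≫ α)
    (hcomm : ∀ i : ℕ, mval (R.d i) ≫ mval (αc i) = mval (αc (i + 1)) ≫ mval (R'.d i))
    (hzero : preadditiveYoneda.map (αc 0) ≫ cokernel.π (preadditiveYoneda.map (R'.d 0)) = 0) :
    ∃ h : ∀ i : ℕ, R.G i ⟶ R'.G (i + 1),
      mval (αc 0) = mval (h 0) ≫ mval (R'.d 0) ∧
      ∀ i : ℕ, mval (αc (i + 1)) =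
        mval (h (i + 1)) ≫ mval (R'.d (i + 1)) + mval (R.d i) ≫ mval (h i) :=
  statement9_general A n X X' R R' αc hcomm hzero

end Paper
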